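/- For every i with 1 ≤ i < h and every λ with r_{i+1} < λ ≤ r_i, the min-cut capacity function of the parametric network satisfies κ(λ) = ∑_{c ∈ C_1∪…∪C_i} p(c) + ∑_{b ∈ B_{i+1}∪…∪B_h} max(0, e(b) − λ). -/

import Mathlib

open scoped Classical

/-- An equality network: buyers `B`, goods `C`, adjacency `E`,
budgets `e > 0` and prices `p > 0`; every buyer is adjacent to some good
and every good is adjacent to some buyer. -/
structure EqNet (B C : Type) [Fintype B] [Fintype C] [Nonempty B] [Nonempty C] where
  E : B → C → Prop
  e : B → ℝ
  p : C → ℝ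
  buyer_adj : ∀ b, ∃ c, E b c
  good_adj : ∀ c, ∃ b, E b c
  e_pos : ∀ b, 0 < e b
  p_pos : ∀ c, 0 < p c

variable {B C : Type} [Fintype B] [Fintype C] [Nonempty B] [Nonempty C]

/-- A flow in an equality network. -/
def IsFlow (N : EqNet B C) (f : B → C → ℝ) : Prop :=
  (∀ b c, 0 ≤ f b c) ∧ (∀ b c, ¬ N.E b c → f b c = 0) ∧
  (∀ b, ∑ c, f b c ≤ N.e b) ∧ (∀ c, ∑ b, f b c ≤ N.p c)

/-- The value of a flow. -/
def flowValue (f : B → C → ℝ) : ℝ := ∑ b, ∑ c, f b c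

/-- A maximum flow. -/
def IsMaxFlow (N : EqNet B C) (f : B → C → ℝ) : Prop :=
  IsFlow N f ∧ ∀ g, IsFlow N g → flowValue g ≤ flowValue f

/-- The surplus of buyer `b` with respect to flow `f`. -/
def surplus (N : EqNet B C) (f : B → C → ℝ) (b : B) : ℝ := N.e b - ∑ c, f b c

/-- A good `c` is saturated by `f`. -/
def Saturated (N : EqNet B C) (f : B → C → ℝ) (c : C) : Prop := ∑ b, f b c = N.p c

/-- A balanced flow: a maximum flow minimizing the two-norm of the surplus vector. -/
def IsBalancedFlow (N : EqNet B C) (f : B → C → ℝ) : Prop :=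
  IsMaxFlow N f ∧
  ∀ g, IsMaxFlow N g → ∑ b, (surplus N f b) ^ 2 ≤ ∑ b, (surplus N g b) ^ 2

/-- A cut of the parametric network: `S ⊆ B`, `T ⊆ C` on the source side,
with every good adjacent to a buyer in `S` belonging to `T`. -/
def IsCut (N : EqNet B C) (S : Finset B) (T : Finset C) : Prop :=
  ∀ b ∈ S, ∀ c, N.E b c → c ∈ T

/-- The capacity of the cut `(S, T)` at parameter `lam`. -/
noncomputable def cutCap (N : EqNet B C) (lam : ℝ) (S : Finset B) (T : Finset C) : ℝ :=
  ∑ b ∈ Sᶜ, max 0 (N.e b - lam) + ∑ c ∈ T, N.p c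

/-- `(S, T)` is a minimum cut at `lam`. -/
def IsMinCut (N : EqNet B C) (lam : ℝ) (S : Finset B) (T : Finset C) : Prop :=
  IsCut N S T ∧ ∀ S' T', IsCut N S' T' → cutCap N lam S T ≤ cutCap N lam S' T'

/-- `(S, T)` is the minimum cut at `lam` with minimum sink side. -/
def HasMinSink (N : EqNet B C) (lam : ℝ) (S : Finset B) (T : Finset C) : Prop :=
  IsMinCut N lam S T ∧ ∀ S' T', IsMinCut N lam S' T' → S' ⊆ S ∧ T' ⊆ T

/-- The min-cut capacity function `κ(λ)`. -/
noncomputable def kappa (N : EqNet B C) (lam : ℝ) : ℝ :=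
  sInf {x | ∃ S T, IsCut N S T ∧ cutCap N lam S T = x}

/-- `B_1 ∪ … ∪ B_i` (and similarly for goods): union of the blocks with index `≤ i`. -/
noncomputable def blocksUpTo {h : ℕ} {α : Type} (D : Fin h → Finset α) (i : Fin h) : Finset α :=
  (Finset.univ.filter (fun j => j ≤ i)).biUnion D

/-!
Rescale every row of `f*` to `min (∑_c f*(b,c)) (max 0 (e(b) - λ))`. This is a flow of the
parametric network; on `B_1 ∪ … ∪ B_i` the surplus is at least `r_i ≥ λ`, so those rows are
untouched and, since `C_1 ∪ … ∪ C_i` is saturated by them alone, they carry `∑ p(c)` over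
these goods, while on the remaining blocks the surplus is at most `r_{i+1} < λ`, so the rows
are cut down to exactly `max 0 (e(b) - λ)`. The value of this flow equals the capacity of the
cut `(B_1 ∪ … ∪ B_i, C_1 ∪ … ∪ C_i)`, so by weak duality both are `κ(λ)`.
-/

open Finset

def IsParamFlow (N : EqNet B C) (lam : ℝ) (g : B → C → ℝ) : Prop :=
  (∀ b c, 0 ≤ g b c) ∧ (∀ b c, ¬ N.E b c → g b c = 0) ∧
  (∀ b, ∑ c, g b c ≤ max 0 (N.e b - lam)) ∧ (∀ c, ∑ b, g b c ≤ N.p c)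

section Duality

variable {N : EqNet B C} {lam : ℝ} {g : B → C → ℝ} {S : Finset B} {T : Finset C}

theorem IsParamFlow.flowValue_le_cutCap (hg : IsParamFlow N lam g) (hcut : IsCut N S T) :
    flowValue g ≤ cutCap N lam S T := by
  obtain ⟨hg0, hgE, hgB, hgC⟩ := hg
  have source : ∑ b ∈ S, ∑ c, g b c ≤ ∑ c ∈ T, N.p c :=
    calc ∑ b ∈ S, ∑ c, g b c = ∑ b ∈ S, ∑ c ∈ T, g b c :=
          sum_congr rfl fun b hb => (sum_subset (subset_univ T)
            fun c _ hc => hgE b c fun hbc => hc (hcut b hb c hbc)).symm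
      _ = ∑ c ∈ T, ∑ b ∈ S, g b c := sum_comm
      _ ≤ ∑ c ∈ T, ∑ b, g b c := sum_le_sum fun c _ =>
          sum_le_sum_of_subset_of_nonneg (subset_univ S) fun b _ _ => hg0 b c
      _ ≤ ∑ c ∈ T, N.p c := sum_le_sum fun c _ => hgC c
  have sink : ∑ b ∈ Sᶜ, ∑ c, g b c ≤ ∑ b ∈ Sᶜ, max 0 (N.e b - lam) :=
    sum_le_sum fun b _ => hgB b
  rw [flowValue, ← sum_add_sum_compl S, cutCap]
  linarith

theorem kappa_eq_cutCap_of_flowValue_eq (hg : IsParamFlow N lam g) (hcut : IsCut N S T)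
    (heq : flowValue g = cutCap N lam S T) : kappa N lam = cutCap N lam S T :=
  IsLeast.csInf_eq ⟨⟨S, T, hcut, rfl⟩, by
    rintro _ ⟨S', T', hcut', rfl⟩
    exact heq ▸ hg.flowValue_le_cutCap hcut'⟩

end Duality

section ScaleRows

variable {ι κ : Type*} [Fintype κ] {f : ι → κ → ℝ} {u : ι → ℝ} {i : ι}

-- A zero row stays zero (`x / 0 = 0`), so no case split is needed.
noncomputable def scaleRows (f : ι → κ → ℝ) (u : ι → ℝ) : ι → κ → ℝ :=
  fun i k => u i / (∑ k', f i k') * f i k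

theorem sum_scaleRows (hf : ∀ k, 0 ≤ f i k) (hu0 : 0 ≤ u i) (hu : u i ≤ ∑ k, f i k) :
    ∑ k, scaleRows f u i k = u i := by
  simp only [scaleRows, ← mul_sum]
  rcases (sum_nonneg fun k _ => hf k).eq_or_lt with hzero | hpos
  · rw [← hzero] at hu ⊢
    simp only [div_zero, zero_mul]
    linarith
  · field_simp

theorem scaleRows_nonneg (hf : ∀ k, 0 ≤ f i k) (hu0 : 0 ≤ u i) (k : κ) :
    0 ≤ scaleRows f u i k :=
  mul_nonneg (div_nonneg hu0 (sum_nonneg fun k _ => hf k)) (hf k)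

theorem scaleRows_le (hf : ∀ k, 0 ≤ f i k) (hu : u i ≤ ∑ k, f i k) (k : κ) :
    scaleRows f u i k ≤ f i k :=
  mul_le_of_le_one_left (hf k) (div_le_one_of_le₀ hu (sum_nonneg fun k _ => hf k))

end ScaleRows

section Flow

variable {N : EqNet B C} {f : B → C → ℝ} {S : Finset B} {T : Finset C}

theorem IsFlow.sum_rows_eq_sum_prices (hf : IsFlow N f) (hcut : IsCut N S T)
    (hback : ∀ b ∉ S, ∀ c ∈ T, f b c = 0) (hsat : ∀ c ∈ T, Saturated N f c) :
    ∑ b ∈ S, ∑ c, f b c = ∑ c ∈ T, N.p c :=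
  calc ∑ b ∈ S, ∑ c, f b c = ∑ b ∈ S, ∑ c ∈ T, f b c :=
        sum_congr rfl fun b hb => (sum_subset (subset_univ T)
          fun c _ hc => hf.2.1 b c fun hbc => hc (hcut b hb c hbc)).symm
    _ = ∑ c ∈ T, ∑ b ∈ S, f b c := sum_comm
    _ = ∑ c ∈ T, ∑ b, f b c := sum_congr rfl fun c hc =>
        sum_subset (subset_univ S) fun b _ hb => hback b hb c hc
    _ = ∑ c ∈ T, N.p c := sum_congr rfl hsat

theorem IsFlow.isParamFlow_scaleRows (hf : IsFlow N f) (lam : ℝ) :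
    IsParamFlow N lam (scaleRows f fun b => min (∑ c, f b c) (max 0 (N.e b - lam))) := by
  obtain ⟨hf0, hfE, -, hfC⟩ := hf
  have hrow : ∀ b, 0 ≤ min (∑ c, f b c) (max 0 (N.e b - lam)) := fun b =>
    le_min (sum_nonneg fun c _ => hf0 b c) (le_max_left _ _)
  refine ⟨fun b => scaleRows_nonneg (hf0 b) (hrow b), fun b c hbc => ?_, fun b => ?_,
    fun c => ?_⟩
  · simp only [scaleRows, hfE b c hbc, mul_zero]
  · rw [sum_scaleRows (hf0 b) (hrow b) (min_le_left _ _)]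
    exact min_le_right _ _
  · exact (sum_le_sum fun b _ => scaleRows_le (hf0 b) (min_le_left _ _) c).trans (hfC c)

theorem IsFlow.kappa_eq_cutCap (hf : IsFlow N f) (hcut : IsCut N S T) {lam : ℝ}
    (hback : ∀ b ∉ S, ∀ c ∈ T, f b c = 0) (hsat : ∀ c ∈ T, Saturated N f c)
    (hsource : ∀ b ∈ S, lam ≤ surplus N f b) (hsink : ∀ b ∉ S, surplus N f b ≤ lam) :
    kappa N lam = cutCap N lam S T := by
  set u : B → ℝ := fun b => min (∑ c, f b c) (max 0 (N.e b - lam))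
  have hrow0 : ∀ b, 0 ≤ ∑ c, f b c := fun b => sum_nonneg fun c _ => hf.1 b c
  have hrow : ∀ b, ∑ c, scaleRows f u b c = u b := fun b =>
    sum_scaleRows (hf.1 b) (le_min (hrow0 b) (le_max_left _ _)) (min_le_left _ _)
  refine kappa_eq_cutCap_of_flowValue_eq (hf.isParamFlow_scaleRows lam) hcut ?_
  calc flowValue (scaleRows f u) = ∑ b ∈ S, u b + ∑ b ∈ Sᶜ, u b := by
        simp only [flowValue, hrow, sum_add_sum_compl]
    _ = ∑ b ∈ S, ∑ c, f b c + ∑ b ∈ Sᶜ, max 0 (N.e b - lam) := by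
        congr 1 <;> refine sum_congr rfl fun b hb => ?_
        · have := hsource b hb
          exact min_eq_left (le_max_of_le_right (by rw [surplus] at this; linarith))
        · have := hsink b (mem_compl.1 hb)
          exact min_eq_right (max_le (hrow0 b) (by rw [surplus] at this; linarith))
    _ = cutCap N lam S T := by
        rw [hf.sum_rows_eq_sum_prices hcut hback hsat, cutCap, add_comm]

end Flow

section Blocks

variable {α : Type} {h : ℕ} {D : Fin h → Finset α}

theorem mem_blocksUpTo {i : Fin h} {x : α} : x ∈ blocksUpTo D i ↔ ∃ j ≤ i, x ∈ D j := by
  simp [blocksUpTo]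

theorem compl_blocksUpTo [Fintype α] (hdisj : ∀ i j, i ≠ j → Disjoint (D i) (D j))
    (hcover : univ.biUnion D = univ) (i : Fin h) :
    (blocksUpTo D i)ᶜ = (univ.filter fun j => i < j).biUnion D := by
  ext x
  simp only [mem_compl, mem_blocksUpTo, mem_biUnion, mem_filter, mem_univ, true_and]
  constructor
  · intro hx
    obtain ⟨j, -, hj⟩ := mem_biUnion.1 (hcover ▸ mem_univ x)
    exact ⟨j, lt_of_not_ge fun hji => hx ⟨j, hji, hj⟩, hj⟩
  · rintro ⟨j, hij, hj⟩ ⟨k, hki, hk⟩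
    exact disjoint_left.1 (hdisj j k (hki.trans_lt hij).ne') hj hk

theorem exists_lt_of_notMem_blocksUpTo [Fintype α] (hdisj : ∀ i j, i ≠ j → Disjoint (D i) (D j))
    (hcover : univ.biUnion D = univ) {i : Fin h} {x : α} (hx : x ∉ blocksUpTo D i) :
    ∃ j, i < j ∧ x ∈ D j := by
  have hx' := mem_compl.2 hx
  rw [compl_blocksUpTo hdisj hcover i] at hx'
  simpa using hx'

end Blocks

theorem kappa_formula_general (N : EqNet B C)
    {h : ℕ}
    (BB : Fin h → Finset B) (CC : Fin h → Finset C) (r : Fin h → ℝ)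
    (fstar : B → C → ℝ) (hbal : IsBalancedFlow N fstar)
    (hBdisj : ∀ i j, i ≠ j → Disjoint (BB i) (BB j))
    (hBcover : Finset.univ.biUnion BB = Finset.univ)
    (hCdisj : ∀ i j, i ≠ j → Disjoint (CC i) (CC j))
    (hCcover : Finset.univ.biUnion CC = Finset.univ)
    (hranti : StrictAnti r)
    (hsurp : ∀ i, ∀ b ∈ BB i, surplus N fstar b = r i)
    (hsat : ∀ i : Fin h, (i : ℕ) + 1 < h → ∀ c ∈ CC i, Saturated N fstar c)
    (hflow0 : ∀ i j : Fin h, j < i → ∀ b ∈ BB i, ∀ c ∈ CC j, fstar b c = 0)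
    (hnoedge : ∀ i j : Fin h, i < j → ∀ b ∈ BB i, ∀ c ∈ CC j, ¬ N.E b c)
    (i : Fin h) (hi : (i : ℕ) + 1 < h) (lam : ℝ)
    (hlam1 : r ⟨(i : ℕ) + 1, hi⟩ < lam) (hlam2 : lam ≤ r i) :
    kappa N lam = ∑ c ∈ blocksUpTo CC i, N.p c +
      ∑ b ∈ (Finset.univ.filter (fun j => i < j)).biUnion BB, max 0 (N.e b - lam) := by
  have hcut : IsCut N (blocksUpTo BB i) (blocksUpTo CC i) := by
    intro b hb c hbc
    by_contra hc
    obtain ⟨j, hji, hbj⟩ := mem_blocksUpTo.1 hb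
    obtain ⟨k, hik, hck⟩ := exists_lt_of_notMem_blocksUpTo hCdisj hCcover hc
    exact hnoedge j k (hji.trans_lt hik) b hbj c hck hbc
  have hkappa := hbal.1.1.kappa_eq_cutCap hcut (lam := lam)
    (fun b hb c hc => by
      obtain ⟨j, hij, hbj⟩ := exists_lt_of_notMem_blocksUpTo hBdisj hBcover hb
      obtain ⟨k, hki, hck⟩ := mem_blocksUpTo.1 hc
      exact hflow0 j k (hki.trans_lt hij) b hbj c hck)
    (fun c hc => by
      obtain ⟨k, hki, hck⟩ := mem_blocksUpTo.1 hc
      exact hsat k ((Nat.add_le_add_right hki 1).trans_lt hi) c hck)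
    (fun b hb => by
      obtain ⟨j, hji, hbj⟩ := mem_blocksUpTo.1 hb
      exact hsurp j b hbj ▸ hlam2.trans (hranti.antitone hji))
    (fun b hb => by
      obtain ⟨j, hij, hbj⟩ := exists_lt_of_notMem_blocksUpTo hBdisj hBcover hb
      exact hsurp j b hbj ▸ (hranti.antitone (show ⟨i + 1, hi⟩ ≤ j from hij)).trans hlam1.le)
  rw [hkappa, cutCap, compl_blocksUpTo hBdisj hBcover i, add_comm]

/-- For `1 ≤ i < h` and `r_{i+1} < λ ≤ r_i`,
`κ(λ) = ∑_{c ∈ C_1∪…∪C_i} p(c) + ∑_{b ∈ B_{i+1}∪…∪B_h} max(0, e(b) − λ)`. -/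
theorem kappa_formula (N : EqNet B C)
    {h : ℕ} (hpos : 0 < h)
    (BB : Fin h → Finset B) (CC : Fin h → Finset C) (r : Fin h → ℝ)
    (fstar : B → C → ℝ) (hbal : IsBalancedFlow N fstar)
    (hBne : ∀ i, (BB i).Nonempty)
    (hBdisj : ∀ i j, i ≠ j → Disjoint (BB i) (BB j))
    (hBcover : Finset.univ.biUnion BB = Finset.univ)
    (hCdisj : ∀ i j, i ≠ j → Disjoint (CC i) (CC j))
    (hCcover : Finset.univ.biUnion CC = Finset.univ)
    (hranti : StrictAnti r)
    (hrlast : r ⟨h - 1, Nat.sub_lt hpos Nat.one_pos⟩ = 0)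
    (hsurp : ∀ i, ∀ b ∈ BB i, surplus N fstar b = r i)
    (hsat : ∀ i : Fin h, (i : ℕ) + 1 < h → ∀ c ∈ CC i, Saturated N fstar c)
    (hflow0 : ∀ i j : Fin h, j < i → ∀ b ∈ BB i, ∀ c ∈ CC j, fstar b c = 0)
    (hnoedge : ∀ i j : Fin h, i < j → ∀ b ∈ BB i, ∀ c ∈ CC j, ¬ N.E b c)
    (hrecv : ∀ i : Fin h, (i : ℕ) + 1 < h → ∀ c ∈ CC i, ∃ b ∈ BB i, 0 < fstar b c)
    (i : Fin h) (hi : (i : ℕ) + 1 < h) (lam : ℝ)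
    (hlam1 : r ⟨(i : ℕ) + 1, hi⟩ < lam) (hlam2 : lam ≤ r i) :
    kappa N lam = ∑ c ∈ blocksUpTo CC i, N.p c +
      ∑ b ∈ (Finset.univ.filter (fun j => i < j)).biUnion BB, max 0 (N.e b - lam) :=
  kappa_formula_general N BB CC r fstar hbal hBdisj hBcover hCdisj hCcover hranti hsurp hsat hflow0
    hnoedge i hi lam hlam1 hlam2
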